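/- arXiv:2211.05641 — 3 statements merged into one kernel-verified Lean document; each statement's English description precedes it below -/
import Mathlib

section
/- Let x₁ < x₂ < ⋯ < xₙ be real numbers, Ω* the dual of a norm on ℝ^k, and α₁,…,αₙ ∈ ℝ^k. If Ω*(Σᵢ αᵢ·max(xᵢ − xⱼ, 0)) ≤ 1 for all j ∈ {1,…,n}, then Ω*(Σᵢ αᵢ·max(xᵢ − c, 0)) ≤ 1 for all c ∈ [x₁, xₙ]. -/
/-!
The function `F c = ∑ i, max (x i - c) 0 • α i` is affine on every interval `[x i, x j]` that
contains no node `x l` in its interior, so for `c` in such an interval `F c` lies on the segment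
between `F (x i)` and `F (x j)`. Any `c ∈ [x₀, xₙ₋₁]` lies in such an interval, and the sublevel
set `{Ω* ≤ 1}` is convex.
-/

noncomputable def dualNorm (k : ℕ) (Ω : (Fin k → ℝ) → ℝ) (g : Fin k → ℝ) : ℝ :=
  sSup {t : ℝ | ∃ w : Fin k → ℝ, Ω w = 1 ∧ t = ∑ j, g j * w j}

open Finset Set Matrix

namespace Seminorm

theorem le_sum_single_mul_norm {ι : Type*} [Fintype ι] [DecidableEq ι]
    (p : Seminorm ℝ (ι → ℝ)) (w : ι → ℝ) :
    p w ≤ (∑ i, p (Pi.single i 1)) * ‖w‖ := by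
  calc p w = p (∑ i, w i • Pi.single i 1) := by
        congr 1; ext j; simp [Pi.single_apply]
    _ ≤ ∑ i, p (w i • Pi.single i 1) :=
        le_sum_of_subadditive p (map_zero p).le (map_add_le_add p) _ _
    _ = ∑ i, ‖w i‖ * p (Pi.single i 1) := by simp only [map_smul_eq_mul]
    _ ≤ ∑ i, ‖w‖ * p (Pi.single i 1) :=
        sum_le_sum fun i _ => mul_le_mul_of_nonneg_right (norm_le_pi_norm w i) (apply_nonneg _ _)
    _ = (∑ i, p (Pi.single i 1)) * ‖w‖ := by rw [← mul_sum, mul_comm]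

theorem continuous_pi {ι : Type*} [Fintype ι] (p : Seminorm ℝ (ι → ℝ)) : Continuous p := by
  classical
  let C : NNReal := ⟨∑ i, p (Pi.single i 1), sum_nonneg fun i _ => apply_nonneg _ _⟩
  refine continuous_of_le (q := C • normSeminorm ℝ (ι → ℝ)) ?_ fun w => ?_
  · exact continuous_const.mul continuous_norm
  · exact le_sum_single_mul_norm p w

theorem exists_pos_mul_norm_le {E : Type*} [NormedAddCommGroup E] [NormedSpace ℝ E]
    [FiniteDimensional ℝ E] (p : Seminorm ℝ E) (hp_cont : Continuous p)
    (hp_pos : ∀ v, v ≠ 0 → 0 < p v) : ∃ m > 0, ∀ w, m * ‖w‖ ≤ p w := by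
  rcases subsingleton_or_nontrivial E with _ | _
  · exact ⟨1, one_pos, fun w => by simp [Subsingleton.elim w 0]⟩
  obtain ⟨w₀, hw₀, hmin⟩ := (isCompact_sphere (0 : E) 1).exists_isMinOn
    (NormedSpace.sphere_nonempty.mpr zero_le_one) hp_cont.continuousOn
  have hw₀ : ‖w₀‖ = 1 := by simpa using hw₀
  refine ⟨p w₀, hp_pos w₀ (norm_ne_zero_iff.mp (by simp [hw₀])), fun w => ?_⟩
  rcases eq_or_ne w 0 with rfl | hw
  · simp
  have hnorm : 0 < ‖w‖ := norm_pos_iff.mpr hw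
  have hsphere : ‖w‖⁻¹ • w ∈ Metric.sphere (0 : E) 1 := by
    simp [norm_smul, hnorm.ne']
  have := hmin hsphere
  simp only [mem_ofPred_eq, map_smul_eq_mul, norm_inv, norm_norm] at this
  calc p w₀ * ‖w‖ ≤ ‖w‖⁻¹ * p w * ‖w‖ := by gcongr
    _ = p w := by field_simp

theorem isCompact_setOf_eq_one {E : Type*} [NormedAddCommGroup E] [NormedSpace ℝ E]
    [FiniteDimensional ℝ E] (p : Seminorm ℝ E) (hp_cont : Continuous p)
    (hp_pos : ∀ v, v ≠ 0 → 0 < p v) : IsCompact {w | p w = 1} := by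
  obtain ⟨m, hm, hle⟩ := exists_pos_mul_norm_le p hp_cont hp_pos
  refine Metric.isCompact_of_isClosed_isBounded (isClosed_eq hp_cont continuous_const) ?_
  refine (Metric.isBounded_closedBall (x := 0) (r := m⁻¹)).subset fun w hw => ?_
  rw [mem_closedBall_zero_iff, ← one_div, le_div_iff₀' hm, ← hw.out]
  exact hle w

end Seminorm

section DualNorm

variable {k : ℕ} (p : Seminorm ℝ (Fin k → ℝ))

/- The real `sSup` of a set that is not bounded above is `0`, so comparing with `dualNorm` needs
the unit `p`-sphere to be compact. -/
theorem bddAbove_dualNorm_set (hp_pos : ∀ v, v ≠ 0 → 0 < p v) (g : Fin k → ℝ) :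
    BddAbove {t : ℝ | ∃ w : Fin k → ℝ, p w = 1 ∧ t = g ⬝ᵥ w} := by
  have hK := p.isCompact_setOf_eq_one p.continuous_pi hp_pos
  refine (hK.bddAbove_image (f := (g ⬝ᵥ ·)) (by fun_prop)).mono ?_
  rintro _ ⟨w, hw, rfl⟩
  exact ⟨w, hw, rfl⟩

theorem dotProduct_le_dualNorm (hp_pos : ∀ v, v ≠ 0 → 0 < p v) (g : Fin k → ℝ)
    {w : Fin k → ℝ} (hw : p w = 1) : g ⬝ᵥ w ≤ dualNorm k p g :=
  le_csSup (bddAbove_dualNorm_set p hp_pos g) ⟨w, hw, rfl⟩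

theorem dualNorm_nonneg (g : Fin k → ℝ) : 0 ≤ dualNorm k p g := by
  by_cases h : ∃ w, p w = 1
  · obtain ⟨w, hw⟩ := h
    refine Real.sSup_nonneg' ?_
    rcases le_total 0 (g ⬝ᵥ w) with hg | hg
    · exact ⟨g ⬝ᵥ w, ⟨w, hw, rfl⟩, hg⟩
    · exact ⟨g ⬝ᵥ -w, ⟨-w, by rwa [map_neg_eq_map], rfl⟩, by simpa using hg⟩
  · have : {t : ℝ | ∃ w : Fin k → ℝ, p w = 1 ∧ t = ∑ j, g j * w j} = ∅ :=
      eq_empty_of_forall_notMem fun _ ⟨w, hw, _⟩ => h ⟨w, hw⟩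
    rw [dualNorm, this, Real.sSup_empty]

theorem convexOn_dualNorm (hp_pos : ∀ v, v ≠ 0 → 0 < p v) : ConvexOn ℝ univ (dualNorm k p) := by
  refine ⟨convex_univ, fun g _ h _ a b ha hb _ => ?_⟩
  refine Real.sSup_le ?_ (by positivity [dualNorm_nonneg p g, dualNorm_nonneg p h])
  rintro _ ⟨w, hw, rfl⟩
  change (a • g + b • h) ⬝ᵥ w ≤ _
  simp only [add_dotProduct, smul_dotProduct, smul_eq_mul]
  gcongr
  · exact dotProduct_le_dualNorm p hp_pos g hw
  · exact dotProduct_le_dualNorm p hp_pos h hw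

end DualNorm

theorem max_sub_convexComb_zero_eq {s a b l m : ℝ} (hab : a ≤ b) (hs : s ≤ a ∨ b ≤ s)
    (hl : 0 ≤ l) (hm : 0 ≤ m) (hlm : l + m = 1) :
    max (s - (l * a + m * b)) 0 = l * max (s - a) 0 + m * max (s - b) 0 := by
  have hc_lo : a ≤ l * a + m * b := by
    linear_combination m * (sub_nonneg.2 hab) - a * hlm
  have hc_hi : l * a + m * b ≤ b := by
    linear_combination l * (sub_nonneg.2 hab) + b * hlm
  rcases hs with hs | hs
  · simp only [max_eq_right (by linarith : s - (l * a + m * b) ≤ 0),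
      max_eq_right (by linarith : s - a ≤ 0), max_eq_right (by linarith : s - b ≤ 0)]
    ring
  · simp only [max_eq_left (by linarith : 0 ≤ s - (l * a + m * b)),
      max_eq_left (by linarith : 0 ≤ s - a), max_eq_left (by linarith : 0 ≤ s - b)]
    linear_combination (-s) * hlm

theorem sum_max_sub_smul_mem_segment {ι E : Type*} [Fintype ι] [AddCommGroup E] [Module ℝ E]
    (x : ι → ℝ) (α : ι → E) {a b c : ℝ} (hc : c ∈ Icc a b) (hgap : ∀ i, x i ≤ a ∨ b ≤ x i) :
    ∑ i, max (x i - c) 0 • α i ∈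
      segment ℝ (∑ i, max (x i - a) 0 • α i) (∑ i, max (x i - b) 0 • α i) := by
  have hab : a ≤ b := hc.1.trans hc.2
  rw [← segment_eq_Icc hab] at hc
  obtain ⟨l, m, hl, hm, hlm, rfl⟩ := hc
  refine ⟨l, m, hl, hm, hlm, ?_⟩
  simp only [smul_sum, smul_smul, ← sum_add_distrib, ← add_smul, smul_eq_mul,
    max_sub_convexComb_zero_eq hab (hgap _) hl hm hlm]

theorem exists_consecutive_values_bracketing {ι : Type*} [Fintype ι] (x : ι → ℝ) {c : ℝ}
    (hlo : ∃ i, x i ≤ c) (hhi : ∃ j, c ≤ x j) :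
    ∃ i j, c ∈ Icc (x i) (x j) ∧ ∀ l, x l ≤ x i ∨ x j ≤ x l := by
  classical
  obtain ⟨i₀, hi₀⟩ := hlo
  obtain ⟨j₀, hj₀⟩ := hhi
  obtain ⟨i, hi, hi_max⟩ := (univ.filter fun l => x l ≤ c).exists_max_image x ⟨i₀, by simpa⟩
  obtain ⟨j, hj, hj_min⟩ := (univ.filter fun l => c ≤ x l).exists_min_image x ⟨j₀, by simpa⟩
  simp only [Finset.mem_filter_univ] at hi hj hi_max hj_min
  refine ⟨i, j, ⟨hi, hj⟩, fun l => ?_⟩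
  rcases le_total (x l) c with hl | hl
  · exact Or.inl (hi_max l hl)
  · exact Or.inr (hj_min l hl)

theorem stmt4 (n k : ℕ) (hn : 2 ≤ n) (x : Fin n → ℝ)
    (Ω : (Fin k → ℝ) → ℝ)
    (hΩ_add : ∀ v w, Ω (v + w) ≤ Ω v + Ω w)
    (hΩ_smul : ∀ (c : ℝ) (v : Fin k → ℝ), Ω (c • v) = |c| * Ω v)
    (hΩ_pos : ∀ v, v ≠ 0 → 0 < Ω v)
    (α : Fin n → Fin k → ℝ)
    (h : ∀ j : Fin n, dualNorm k Ω (∑ i, max (x i - x j) 0 • α i) ≤ 1) :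
    ∀ c ∈ Set.Icc (x ⟨0, by omega⟩) (x ⟨n - 1, by omega⟩),
      dualNorm k Ω (∑ i, max (x i - c) 0 • α i) ≤ 1 := by
  intro c hc
  let p : Seminorm ℝ (Fin k → ℝ) := .of Ω hΩ_add fun a v => hΩ_smul a v
  have hconvex : Convex ℝ {g | g ∈ univ ∧ dualNorm k Ω g ≤ 1} :=
    (convexOn_dualNorm p hΩ_pos).convex_le 1
  obtain ⟨i, j, hcij, hgap⟩ := exists_consecutive_values_bracketing x ⟨_, hc.1⟩ ⟨_, hc.2⟩
  exact (hconvex.segment_subset ⟨trivial, h i⟩ ⟨trivial, h j⟩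
    (sum_max_sub_smul_mem_segment x α hcij hgap)).2
end

section
/- Let −1 = x₁ < ⋯ < xₙ = 1 with labels y₁,…,yₙ ∈ ℝ. Define γ_l = (y_{j_{l+1}} − y_{j_l})/(x_{j_{l+1}} − x_{j_l}) for the ordered indices j₁ < ⋯ < j_m of the set J = {1, n} ∪ { i : (y_{i+1}−y_i)/(x_{i+1}−x_i) ≠ (y_i−y_{i−1})/(x_i−x_{i−1}) }. Then the function f(x) = (y₁/2)·max(1 − x, 0) + (y₁/2 + γ₁)·max(x + 1, 0) + Σ_{l=2}^{m−1} (γ_l − γ_{l−1})·max(x − x_{j_l}, 0) satisfies f(xᵢ) = yᵢ for all i ∈ {1,…,n}. -/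
theorem stmt7 (n m : ℕ) (hn : 2 ≤ n) (hm : 2 ≤ m)
    (x y : ℕ → ℝ)
    (hmono : ∀ i j, i < j → j < n → x i < x j)
    (hx0 : x 0 = -1) (hxl : x (n - 1) = 1)
    (s : ℕ → ℝ) (hs : ∀ i, s i = (y (i + 1) - y i) / (x (i + 1) - x i))
    (j : ℕ → ℕ)
    (hjmono : ∀ a b, a < b → b < m → j a < j b)
    (hjrange : ∀ i, (i < n ∧ (i = 0 ∨ i = n - 1 ∨
        (0 < i ∧ i < n - 1 ∧ s i ≠ s (i - 1)))) ↔ ∃ l < m, j l = i)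
    (γ : ℕ → ℝ)
    (hγ : ∀ l, γ l = (y (j (l + 1)) - y (j l)) / (x (j (l + 1)) - x (j l))) :
    ∀ i < n,
      (y 0 / 2) * max (1 - x i) 0 + (y 0 / 2 + γ 0) * max (x i + 1) 0
        + ∑ l ∈ Finset.Ico 1 (m - 1), (γ l - γ (l - 1)) * max (x i - x (j l)) 0
      = y i := by
  -- basic facts about j
  have hjlt : ∀ l < m, j l < n := by
    intro l hl
    exact ((hjrange (j l)).mpr ⟨l, hl, rfl⟩).1
  have hjmono' : ∀ a b, a ≤ b → b < m → j a ≤ j b := by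
    intro a b hab hb
    rcases eq_or_lt_of_le hab with h | h
    · exact le_of_eq (by rw [h])
    · exact le_of_lt (hjmono a b h hb)
  have hj0 : j 0 = 0 := by
    obtain ⟨l, hl, hjl⟩ := (hjrange 0).mp ⟨by omega, Or.inl rfl⟩
    rcases Nat.eq_zero_or_pos l with h | h
    · rw [h] at hjl; exact hjl
    · have := hjmono 0 l h hl; omega
  have hjlast : j (m - 1) = n - 1 := by
    obtain ⟨l, hl, hjl⟩ := (hjrange (n - 1)).mp ⟨by omega, Or.inr (Or.inl rfl)⟩
    have hcase : l = m - 1 ∨ l < m - 1 := by omega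
    rcases hcase with h | h
    · rw [h] at hjl; exact hjl
    · have h1 := hjmono l (m - 1) h (by omega)
      have h2 := hjlt (m - 1) (by omega)
      omega
  -- slope constancy between kinks
  have hconst : ∀ l, l + 1 < m → ∀ k, j l ≤ k → k < j (l + 1) → s k = s (j l) := by
    intro l hl k
    induction k using Nat.strong_induction_on with
    | _ k ih =>
      intro hk1 hk2
      rcases eq_or_lt_of_le hk1 with h | h
      · rw [← h]
      · -- j l < k < j (l+1), so k is not a kink
        have hkn : ¬ ∃ l' < m, j l' = k := by
          rintro ⟨l', hl', rfl⟩
          have h1 : l < l' := by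
            by_contra hc
            have := hjmono' l' l (by omega) (by omega); omega
          have h2 : l' < l + 1 := by
            by_contra hc
            have := hjmono' (l + 1) l' (by omega) hl'; omega
          omega
        have hkl : k < n - 1 := by
          have := hjlt (l + 1) hl; omega
        have hne := (not_iff_not.mpr (hjrange k)).mpr hkn
        have hsk : s k = s (k - 1) := by
          by_contra hc
          exact hne ⟨by omega, Or.inr (Or.inr ⟨by omega, hkl, hc⟩)⟩
        rw [hsk]
        exact ih (k - 1) (by omega) (by omega) (by omega)
  -- y is affine on each kink interval with slope s (j l)
  have haff : ∀ l, l + 1 < m → ∀ k, j l ≤ k → k ≤ j (l + 1) →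
      y k = y (j l) + s (j l) * (x k - x (j l)) := by
    intro l hl k hk1
    induction k, hk1 using Nat.le_induction with
    | base => intro _; ring
    | succ k hk1 ih =>
      intro hk2
      have hk' : k ≤ j (l + 1) := by omega
      have hkk : k < j (l + 1) := by omega
      have hklt : k + 1 < n := lt_of_le_of_lt hk2 (hjlt (l + 1) hl)
      have hxne : x (k + 1) - x k ≠ 0 := by
        have := hmono k (k + 1) (by omega) hklt
        exact ne_of_gt (by linarith)
      have hstep : y (k + 1) = y k + s k * (x (k + 1) - x k) := by
        rw [hs k, div_mul_cancel₀ _ hxne]; ring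
      rw [hstep, ih hk', hconst l hl k hk1 hkk]; ring
  -- γ l equals the common slope
  have hγs : ∀ l, l + 1 < m → γ l = s (j l) := by
    intro l hl
    have hjj : j l < j (l + 1) := hjmono l (l + 1) (by omega) hl
    have hxlt : x (j l) < x (j (l + 1)) := hmono _ _ hjj (hjlt (l + 1) hl)
    have hne : x (j (l + 1)) - x (j l) ≠ 0 := ne_of_gt (by linarith)
    have := haff l hl (j (l + 1)) (le_of_lt hjj) le_rfl
    rw [hγ l, this, add_sub_cancel_left, mul_div_assoc, div_self hne, mul_one]
  -- affine with γ slope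
  have haffγ : ∀ l, l + 1 < m → ∀ k, j l ≤ k → k ≤ j (l + 1) →
      y k = y (j l) + γ l * (x k - x (j l)) := by
    intro l hl k hk1 hk2
    rw [hγs l hl]; exact haff l hl k hk1 hk2
  intro i hi
  -- telescoping sum identity
  have hG : ∀ L, L + 1 < m →
      y 0 + γ 0 * (x i + 1) + ∑ l ∈ Finset.Ico 1 (L + 1), (γ l - γ (l - 1)) * (x i - x (j l))
        = y (j L) + γ L * (x i - x (j L)) := by
    intro L
    induction L with
    | zero =>
      intro _
      simp only [Finset.Ico_self, Finset.sum_empty, hj0, hx0, add_zero]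
      ring
    | succ L ih =>
      intro hL
      rw [Finset.sum_Ico_succ_top (by omega)]
      have hIH := ih (by omega)
      have hy := haffγ L (by omega) (j (L + 1)) (le_of_lt (hjmono L (L + 1) (by omega) (by omega))) le_rfl
      have : L + 1 - 1 = L := by omega
      rw [this]
      rw [show y 0 + γ 0 * (x i + 1) +
          (∑ l ∈ Finset.Ico 1 (L + 1), (γ l - γ (l - 1)) * (x i - x (j l)) +
            (γ (L + 1) - γ L) * (x i - x (j (L + 1)))) =
          (y 0 + γ 0 * (x i + 1) + ∑ l ∈ Finset.Ico 1 (L + 1), (γ l - γ (l - 1)) * (x i - x (j l))) +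
            (γ (L + 1) - γ L) * (x i - x (j (L + 1))) from by ring, hIH, hy]
      ring
  -- the greatest kink index at or below i
  set L := Nat.findGreatest (fun l => j l ≤ i) (m - 2) with hL
  have hP0 : j 0 ≤ i := by omega
  have hLspec : j L ≤ i := Nat.findGreatest_spec (P := fun l => j l ≤ i) (Nat.zero_le _) hP0
  have hLle : L ≤ m - 2 := Nat.findGreatest_le _
  have hL1 : L + 1 < m := by omega
  have hgt : ∀ k, L < k → k ≤ m - 2 → i < j k := by
    intro k hk1 hk2
    have := Nat.findGreatest_is_greatest (P := fun l => j l ≤ i) hk1 hk2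
    omega
  have hiLe : i ≤ j (L + 1) := by
    rcases eq_or_lt_of_le hLle with h | h
    · rw [h]
      have : j (m - 2 + 1) = n - 1 := by rw [show m - 2 + 1 = m - 1 by omega]; exact hjlast
      omega
    · exact le_of_lt (hgt (L + 1) (by omega) (by omega))
  -- bounds on x i
  have hxub : x i ≤ 1 := by
    have hcase : i = n - 1 ∨ i < n - 1 := by omega
    rcases hcase with h | h
    · rw [h, hxl]
    · rw [← hxl]; exact le_of_lt (hmono i (n - 1) h (by omega))
  have hxlb : -1 ≤ x i := by
    rcases Nat.eq_zero_or_pos i with h | h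
    · rw [h, hx0]
    · rw [← hx0]; exact le_of_lt (hmono 0 i h hi)
  have hmax1 : max (1 - x i) 0 = 1 - x i := max_eq_left (by linarith)
  have hmax2 : max (x i + 1) 0 = x i + 1 := max_eq_left (by linarith)
  -- split the sum
  have hsplit : ∑ l ∈ Finset.Ico 1 (m - 1), (γ l - γ (l - 1)) * max (x i - x (j l)) 0
      = ∑ l ∈ Finset.Ico 1 (L + 1), (γ l - γ (l - 1)) * (x i - x (j l)) := by
    rw [← Finset.sum_Ico_consecutive _ (by omega : 1 ≤ L + 1) (by omega : L + 1 ≤ m - 1)]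
    have h1 : ∑ l ∈ Finset.Ico 1 (L + 1), (γ l - γ (l - 1)) * max (x i - x (j l)) 0
        = ∑ l ∈ Finset.Ico 1 (L + 1), (γ l - γ (l - 1)) * (x i - x (j l)) := by
      apply Finset.sum_congr rfl
      intro l hl
      rw [Finset.mem_Ico] at hl
      have hjl : j l ≤ j L := hjmono' l L (by omega) (by omega)
      have hxle : x (j l) ≤ x i := by
        rcases eq_or_lt_of_le (le_trans hjl hLspec) with h | h
        · rw [h]
        · exact le_of_lt (hmono (j l) i h hi)
      rw [max_eq_left (by linarith)]
    have h2 : ∑ l ∈ Finset.Ico (L + 1) (m - 1), (γ l - γ (l - 1)) * max (x i - x (j l)) 0 = 0 := by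
      apply Finset.sum_eq_zero
      intro l hl
      rw [Finset.mem_Ico] at hl
      have hij : i < j l := hgt l (by omega) (by omega)
      have : x i < x (j l) := hmono i (j l) hij (hjlt l (by omega))
      rw [max_eq_right (by linarith)]
      ring
    rw [h1, h2, add_zero]
  rw [hmax1, hmax2, hsplit]
  have hyi : y i = y (j L) + γ L * (x i - x (j L)) := haffγ L hL1 i hLspec hiLe
  have := hG L hL1
  rw [hyi, ← this]
  ring
end

section
/- Let x₁ < ⋯ < xₙ be real numbers with labels y₁,…,yₙ ∈ {1,…,k}, and define R_class = {x₁, xₙ} ∪ { xᵢ : y_{i−1} ≠ yᵢ or y_{i+1} ≠ yᵢ }. If i ∉ {1, n} and xᵢ ∉ R_class, then y_{i−1} = yᵢ = y_{i+1}; consequently, any function f: ℝ → ℝ^k whose coordinates are affine on each interval between consecutive points of R_class and which satisfies the margin constraints (e_{yⱼ} − e_l)ᵀ f(xⱼ) ≥ 1{yⱼ ≠ l} at all points xⱼ ∈ R_class, also satisfies these margin constraints at every xᵢ ∉ R_class. -/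
def Rclass (n : ℕ) {k : ℕ} (y : ℕ → Fin k) : Set ℕ :=
  {i | i = 0 ∨ i = n - 1 ∨
    (0 < i ∧ i < n - 1 ∧ (y (i - 1) ≠ y i ∨ y (i + 1) ≠ y i))}

theorem stmt17 (n k : ℕ) (hn : 2 ≤ n)
    (x : ℕ → ℝ) (hmono : ∀ i j, i < j → j < n → x i < x j)
    (y : ℕ → Fin k) :
    (∀ i, 0 < i → i < n - 1 → i ∉ Rclass n y → y (i - 1) = y i ∧ y (i + 1) = y i) ∧
    (∀ f : ℝ → Fin k → ℝ,
      (∀ a b, a ∈ Rclass n y → b ∈ Rclass n y → a < b → b < n →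
        (∀ c, a < c → c < b → c ∉ Rclass n y) →
        ∀ l : Fin k, ∃ p q : ℝ, ∀ t ∈ Set.Icc (x a) (x b), f t l = p * t + q) →
      (∀ i ∈ Rclass n y, i < n →
        ∀ l : Fin k, f (x i) (y i) - f (x i) l ≥ (if y i = l then 0 else 1)) →
      ∀ i < n, ∀ l : Fin k,
        f (x i) (y i) - f (x i) l ≥ (if y i = l then 0 else 1)) := by
  classical
  have part1 : ∀ i, 0 < i → i < n - 1 → i ∉ Rclass n y →
      y (i - 1) = y i ∧ y (i + 1) = y i := by
    intro i hi hin hnot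
    by_contra h
    rw [not_and_or] at h
    exact hnot (Or.inr (Or.inr ⟨hi, hin, by tauto⟩))
  refine ⟨part1, ?_⟩
  intro f haff hmarg i hi l
  by_cases hiS : i ∈ Rclass n y
  · exact hmarg i hiS hi l
  have h0 : 0 < i := by
    rcases Nat.eq_zero_or_pos i with h | h
    · exact absurd (Or.inl h) hiS
    · exact h
  have hn1 : i < n - 1 := by
    rcases lt_or_ge i (n - 1) with h | h
    · exact h
    · have : i = n - 1 := by omega
      exact absurd (Or.inr (Or.inl this)) hiS
  have h0S : 0 ∈ Rclass n y := Or.inl rfl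
  have hn1S : n - 1 ∈ Rclass n y := Or.inr (Or.inl rfl)
  set a := Nat.findGreatest (· ∈ Rclass n y) i with ha
  have haS : a ∈ Rclass n y := Nat.findGreatest_spec (Nat.zero_le i) h0S
  have hai : a ≤ i := Nat.findGreatest_le i
  have halt : a < i := lt_of_le_of_ne hai (fun h => hiS (h ▸ haS))
  have hagr : ∀ c, a < c → c ≤ i → c ∉ Rclass n y :=
    fun c hc hci => Nat.findGreatest_is_greatest hc hci
  have hex : ∃ j, i < j ∧ j ∈ Rclass n y := ⟨n - 1, hn1, hn1S⟩
  set b := Nat.find hex with hbdef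
  obtain ⟨hib, hbS⟩ : i < b ∧ b ∈ Rclass n y := Nat.find_spec hex
  have hbmin : ∀ c, i < c → c < b → c ∉ Rclass n y :=
    fun c hic hcb hcS => Nat.find_min hex hcb ⟨hic, hcS⟩
  have hble : b ≤ n - 1 := Nat.find_min' hex ⟨hn1, hn1S⟩
  have hbn : b < n := by omega
  have hgap : ∀ c, a < c → c < b → c ∉ Rclass n y := by
    intro c hac hcb
    rcases lt_trichotomy c i with h | h | h
    · exact hagr c hac h.le
    · exact h ▸ hiS
    · exact hbmin c h hcb
  have hconst : ∀ c, a < c → c < b → y (c - 1) = y c ∧ y (c + 1) = y c := by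
    intro c hac hcb
    exact part1 c (by omega) (by omega) (hgap c hac hcb)
  have hstep : ∀ c, a ≤ c → c < b → y c = y (c + 1) := by
    intro c hac hcb
    rcases lt_or_eq_of_le (Nat.succ_le_of_lt hcb) with h | h
    · have := (hconst (c + 1) (by omega) h).1
      simpa using this
    · have hab2 : a + 2 ≤ b := by omega
      have := (hconst c (by omega) hcb).2
      exact this.symm
  have hchain : ∀ m, ∀ j, j ≤ m → m ≤ b → a ≤ j → y j = y m := by
    intro m
    induction m with
    | zero => intro j hj _ _; rw [Nat.le_zero.mp hj]
    | succ m ih =>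
      intro j hj hmb haj
      rcases eq_or_lt_of_le hj with h | h
      · rw [h]
      · have h1 : y j = y m := ih j (by omega) (by omega) haj
        have h2 : y m = y (m + 1) := hstep m (by omega) (by omega)
        rw [h1, h2]
  have yai : y a = y i := hchain i a halt.le (by omega) le_rfl
  have yib : y i = y b := hchain b i hib.le le_rfl (by omega)
  obtain ⟨p, q, hpq⟩ := haff a b haS hbS (halt.trans hib) hbn hgap l
  obtain ⟨p', q', hpq'⟩ := haff a b haS hbS (halt.trans hib) hbn hgap (y i)
  have hma := hmarg a haS (by omega) l
  have hmb := hmarg b hbS hbn l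
  rw [yai] at hma
  rw [← yib] at hmb
  have xai : x a < x i := hmono a i halt hi
  have xib : x i < x b := hmono i b hib hbn
  have xab : x a < x b := xai.trans xib
  have hmemA : x a ∈ Set.Icc (x a) (x b) := ⟨le_rfl, xab.le⟩
  have hmemB : x b ∈ Set.Icc (x a) (x b) := ⟨xab.le, le_rfl⟩
  have hmemI : x i ∈ Set.Icc (x a) (x b) := ⟨xai.le, xib.le⟩
  rw [hpq _ hmemA, hpq' _ hmemA] at hma
  rw [hpq _ hmemB, hpq' _ hmemB] at hmb
  rw [hpq _ hmemI, hpq' _ hmemI]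
  rcases le_total p p' with h | h
  · have h1 : (p' - p) * (x i - x a) ≥ 0 := mul_nonneg (by linarith) (by linarith)
    rcases le_or_gt (f (x a) (y i)) 0 with _ | _ <;> nlinarith [hma, h1]
  · have h1 : (p - p') * (x b - x i) ≥ 0 := mul_nonneg (by linarith) (by linarith)
    rcases le_or_gt (f (x b) (y i)) 0 with _ | _ <;> nlinarith [hmb, h1]
end
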